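/- arXiv:1804.02811 — 3 statements merged into one kernel-verified Lean document; each statement's English description precedes it below -/
import Mathlib

section
/- Let p ≥ 1 and let γ : ℝ → ℝ^p be five times continuously differentiable on a neighborhood of 0 with ‖γ′(s)‖ = 1 for all s in that neighborhood. Then, as t → 0⁺, ‖γ(t) − γ(0)‖ = t − (‖γ″(0)‖²/24)·t³ − (⟨γ‴(0), γ″(0)⟩/24)·t⁴ + O(t⁵). -/
/-!
Differentiating `‖γ'‖² ≡ 1` three times gives, at `0`, `⟪γ'', γ'⟫ = 0`, `⟪γ''', γ'⟫ = -‖γ''‖²`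
and `⟪γ'''', γ'⟫ = -3 ⟪γ''', γ''⟫`. Substituting these into the squared norm of the degree-four
Taylor polynomial of `γ t - γ 0` shows `‖γ t - γ 0‖² = (Q t)² + O(t⁶)` with
`Q t = t - ‖γ''‖² t³ / 24 - ⟪γ''', γ''⟫ t⁴ / 24`. As `‖γ t - γ 0‖ + Q t ≥ t / 2` for small
`t > 0`, dividing `‖γ t - γ 0‖² - (Q t)²` by `‖γ t - γ 0‖ + Q t` leaves an `O(t⁵)` error.
-/

open Asymptotics Filter Topology
open scoped RealInnerProductSpace Nat

section NormedSpace

variable {E : Type*} [NormedAddCommGroup E] [NormedSpace ℝ E]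

theorem hasDerivAt_iteratedDeriv_of_contDiffOn {f : ℝ → E} {o : Set ℝ} {x : ℝ} {n k : ℕ}
    (ho : IsOpen o) (hf : ContDiffOn ℝ n f o) (hk : k < n) (hx : x ∈ o) :
    HasDerivAt (iteratedDeriv k f) (iteratedDeriv (k + 1) f x) x := by
  have hdiff : DifferentiableAt ℝ (iteratedDerivWithin k f o) x :=
    (hf.differentiableOn_iteratedDerivWithin (by exact_mod_cast hk) ho.uniqueDiffOn x hx
      ).differentiableAt (ho.mem_nhds hx)
  rw [iteratedDeriv_succ]
  exact ((eventuallyEq_of_mem (ho.mem_nhds hx) (iteratedDerivWithin_of_isOpen ho)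
    ).differentiableAt_iff.mp hdiff).hasDerivAt

theorem sub_sum_iteratedDeriv_isBigO {f : ℝ → E} {x₀ : ℝ} {n : ℕ} {s : Set ℝ} (hs : s ∈ 𝓝 x₀)
    (hf : ContDiffOn ℝ n f s) :
    (fun x ↦ f x - ∑ k ∈ Finset.range n, ((k ! : ℝ)⁻¹ * (x - x₀) ^ k) • iteratedDeriv k f x₀)
      =O[𝓝 x₀] fun x ↦ (x - x₀) ^ n := by
  obtain ⟨r, hr, hball⟩ := Metric.mem_nhds_iff.mp hs
  have htaylor := taylor_isLittleO (convex_ball x₀ r) (Metric.mem_ball_self hr) (hf.mono hball)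
  rw [nhdsWithin_eq_nhds.mpr (Metric.ball_mem_nhds x₀ hr)] at htaylor
  simp_rw [taylor_within_apply, Finset.sum_range_succ,
    iteratedDerivWithin_of_isOpen Metric.isOpen_ball (Metric.mem_ball_self hr)] at htaylor
  have hlast : (fun x ↦ ((n ! : ℝ)⁻¹ * (x - x₀) ^ n) • iteratedDeriv n f x₀)
      =O[𝓝 x₀] fun x ↦ (x - x₀) ^ n :=
    isBigO_of_le' (𝓝 x₀) (c := ‖(n ! : ℝ)⁻¹‖ * ‖iteratedDeriv n f x₀‖) fun x ↦
      le_of_eq (by rw [norm_smul, norm_mul]; ring)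
  exact (htaylor.isBigO.add hlast).congr_left fun x ↦ by abel

end NormedSpace

theorem HasDerivAt.eq_zero_of_eqOn_const {F : ℝ → ℝ} {F' c x : ℝ} {o : Set ℝ}
    (hF : HasDerivAt F F' x) (ho : IsOpen o) (hx : x ∈ o) (hc : ∀ s ∈ o, F s = c) : F' = 0 :=
  hF.unique ((hasDerivAt_const x c).congr_of_eventuallyEq
    (eventuallyEq_of_mem (ho.mem_nhds hx) hc))

theorem isBigO_sub_of_sq_sub {α : Type*} {l : Filter α} {f g u w : α → ℝ} {c : ℝ}
    (hf : ∀ᶠ a in l, 0 ≤ f a) (hc : 0 < c) (hg : ∀ᶠ a in l, c * |u a| ≤ g a)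
    (h : (fun a ↦ f a ^ 2 - g a ^ 2) =O[l] fun a ↦ w a * u a) :
    (fun a ↦ f a - g a) =O[l] w := by
  obtain ⟨K, hK, hKh⟩ := h.exists_pos
  refine IsBigO.of_bound (K / c) ?_
  filter_upwards [hf, hg, hKh.bound] with a hfa hga hsq
  simp only [Real.norm_eq_abs, abs_mul] at hsq ⊢
  have hu : |u a| ≤ (f a + g a) / c := by
    rw [le_div_iff₀ hc]
    linarith
  have hg0 : 0 ≤ g a := (by positivity : 0 ≤ c * |u a|).trans hga
  rcases (add_nonneg hfa hg0).eq_or_lt with hzero | hpos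
  · rw [show f a - g a = 0 by linarith, abs_zero]
    positivity
  · refine le_of_mul_le_mul_right ?_ hpos
    calc |f a - g a| * (f a + g a) = |f a ^ 2 - g a ^ 2| := by
          rw [← abs_of_pos hpos, ← abs_mul]; ring_nf
      _ ≤ K * (|w a| * ((f a + g a) / c)) := hsq.trans (by gcongr)
      _ = K / c * |w a| * (f a + g a) := by ring

theorem eventually_half_abs_le_sub_mul_pow_three_sub_mul_pow_four (a b : ℝ) :
    ∀ᶠ t in 𝓝[>] (0 : ℝ), 2⁻¹ * |t| ≤ t - a * t ^ 3 - b * t ^ 4 := by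
  have hsmall : Tendsto (fun t : ℝ ↦ a * t ^ 2 + b * t ^ 3) (𝓝 0) (𝓝 0) := by
    simpa using ((by fun_prop : Continuous fun t : ℝ ↦ a * t ^ 2 + b * t ^ 3).tendsto 0)
  filter_upwards [self_mem_nhdsWithin,
    nhdsWithin_le_nhds (hsmall.eventually_lt_const (by norm_num : (0 : ℝ) < 2⁻¹))]
    with t (ht : 0 < t) hlt
  rw [abs_of_pos ht]
  nlinarith [mul_le_mul_of_nonneg_left hlt.le ht.le]

section InnerProductSpace

variable {E : Type*} [NormedAddCommGroup E] [InnerProductSpace ℝ E]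

theorem norm_sq_sub_norm_sq_isBigO {α : Type*} {l : Filter α} {X P : α → E} {u v : α → ℝ}
    (hX : X =O[l] u) (hXP : (fun a ↦ X a - P a) =O[l] v) (hvu : v =O[l] u) :
    (fun a ↦ ‖X a‖ ^ 2 - ‖P a‖ ^ 2) =O[l] fun a ↦ v a * u a := by
  have hsum : (fun a ↦ X a + P a) =O[l] u :=
    (hX.add (hX.sub (hXP.trans hvu))).congr_left fun a ↦ by abel
  have hinner : (fun a ↦ ⟪X a - P a, X a + P a⟫) =O[l] fun a ↦ v a * u a :=
    (isBigO_of_le l fun a ↦ by simpa using abs_real_inner_le_norm _ _).trans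
      (hXP.norm_left.mul hsum.norm_left)
  refine hinner.congr_left fun a ↦ ?_
  rw [inner_sub_left, inner_add_right, inner_add_right, real_inner_self_eq_norm_sq,
    real_inner_self_eq_norm_sq, real_inner_comm (X a)]
  ring

theorem norm_sq_sum_Ico_sub_sq_isBigO (v : ℕ → E) (h11 : ‖v 1‖ = 1) (h21 : ⟪v 2, v 1⟫ = 0)
    (h31 : ⟪v 3, v 1⟫ = -‖v 2‖ ^ 2) (h41 : ⟪v 4, v 1⟫ = -3 * ⟪v 3, v 2⟫) :
    (fun t : ℝ ↦ ‖∑ k ∈ Finset.Ico 1 5, ((k ! : ℝ)⁻¹ * t ^ k) • v k‖ ^ 2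
        - (t - (‖v 2‖ ^ 2 / 24) * t ^ 3 - (⟪v 3, v 2⟫ / 24) * t ^ 4) ^ 2)
      =O[𝓝 0] fun t ↦ t ^ 6 := by
  set q : ℝ → ℝ := fun t ↦ (⟪v 4, v 2⟫ / 24 + ‖v 3‖ ^ 2 / 36 - ‖v 2‖ ^ 4 / 576)
    + (⟪v 4, v 3⟫ / 72 - ‖v 2‖ ^ 2 * ⟪v 3, v 2⟫ / 288) * t
    + (‖v 4‖ ^ 2 / 576 - ⟪v 3, v 2⟫ ^ 2 / 576) * t ^ 2 with hq
  have hbounded : q =O[𝓝 0] fun _ ↦ (1 : ℝ) :=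
    ((by fun_prop : Continuous q).tendsto 0).isBigO_one ℝ
  refine ((isBigO_refl (fun t : ℝ ↦ t ^ 6) _).mul hbounded).congr (fun t ↦ ?_) fun t ↦ mul_one _
  simp only [Finset.sum_Ico_eq_sum_range, Finset.sum_range_succ, Finset.sum_range_zero,
    ← real_inner_self_eq_norm_sq, inner_add_left, inner_add_right, real_inner_smul_left,
    real_inner_smul_right, zero_add, Nat.reduceAdd, hq]
  simp only [real_inner_comm (v 2) (v 1), real_inner_comm (v 3) (v 1), real_inner_comm (v 4) (v 1),
    real_inner_comm (v 3) (v 2), real_inner_comm (v 4) (v 2), real_inner_comm (v 4) (v 3),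
    real_inner_self_eq_norm_sq, h11, h21, h31, h41]
  norm_num [Nat.factorial]
  ring

variable {f : ℝ → E} {o : Set ℝ} {x : ℝ}

theorem hasDerivAt_inner_iteratedDeriv {n i j : ℕ} (ho : IsOpen o) (hf : ContDiffOn ℝ n f o)
    (hi : i < n) (hj : j < n) (hx : x ∈ o) :
    HasDerivAt (fun s ↦ ⟪iteratedDeriv i f s, iteratedDeriv j f s⟫)
      (⟪iteratedDeriv i f x, iteratedDeriv (j + 1) f x⟫
        + ⟪iteratedDeriv (i + 1) f x, iteratedDeriv j f x⟫) x :=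
  (hasDerivAt_iteratedDeriv_of_contDiffOn ho hf hi hx).inner ℝ
    (hasDerivAt_iteratedDeriv_of_contDiffOn ho hf hj hx)

theorem inner_iteratedDeriv_two_one_eq_zero (ho : IsOpen o) (hf : ContDiffOn ℝ 2 f o)
    (harc : ∀ s ∈ o, ‖deriv f s‖ = 1) (hx : x ∈ o) :
    ⟪iteratedDeriv 2 f x, iteratedDeriv 1 f x⟫ = 0 := by
  have h := (hasDerivAt_inner_iteratedDeriv (i := 1) (j := 1) ho hf (by norm_num) (by norm_num)
    hx).eq_zero_of_eqOn_const ho hx (c := 1) fun s hs ↦ by simp [harc s hs]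
  rw [real_inner_comm] at h
  linarith

theorem inner_iteratedDeriv_three_one_eq_neg_norm_sq (ho : IsOpen o) (hf : ContDiffOn ℝ 3 f o)
    (harc : ∀ s ∈ o, ‖deriv f s‖ = 1) (hx : x ∈ o) :
    ⟪iteratedDeriv 3 f x, iteratedDeriv 1 f x⟫ = -‖iteratedDeriv 2 f x‖ ^ 2 := by
  have h := (hasDerivAt_inner_iteratedDeriv (i := 2) (j := 1) ho hf (by norm_num) (by norm_num)
    hx).eq_zero_of_eqOn_const ho hx fun s hs ↦
      inner_iteratedDeriv_two_one_eq_zero ho (hf.of_le (by norm_num)) harc hs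
  rw [real_inner_self_eq_norm_sq] at h
  linarith

theorem inner_iteratedDeriv_four_one_eq_neg_three_mul (ho : IsOpen o) (hf : ContDiffOn ℝ 4 f o)
    (harc : ∀ s ∈ o, ‖deriv f s‖ = 1) (hx : x ∈ o) :
    ⟪iteratedDeriv 4 f x, iteratedDeriv 1 f x⟫
      = -3 * ⟪iteratedDeriv 3 f x, iteratedDeriv 2 f x⟫ := by
  have h := ((hasDerivAt_inner_iteratedDeriv (i := 3) (j := 1) ho hf (by norm_num) (by norm_num)
    hx).fun_add (hasDerivAt_inner_iteratedDeriv (i := 2) (j := 2) ho hf (by norm_num)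
    (by norm_num) hx)).eq_zero_of_eqOn_const ho hx (c := 0) fun s hs ↦ by
      rw [real_inner_self_eq_norm_sq, inner_iteratedDeriv_three_one_eq_neg_norm_sq ho
        (hf.of_le (by norm_num)) harc hs, neg_add_cancel]
  simp only [Nat.reduceAdd] at h
  rw [real_inner_comm (iteratedDeriv 3 f x)] at h
  linarith

theorem norm_sub_sq_sub_sq_isBigO_of_norm_deriv_eq_one {U : Set ℝ} (hU : U ∈ 𝓝 (0 : ℝ))
    (hf : ContDiffOn ℝ 5 f U) (harc : ∀ s ∈ U, ‖deriv f s‖ = 1) :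
    (fun t ↦ ‖f t - f 0‖ ^ 2 - (t - (‖iteratedDeriv 2 f 0‖ ^ 2 / 24) * t ^ 3
        - (⟪iteratedDeriv 3 f 0, iteratedDeriv 2 f 0⟫ / 24) * t ^ 4) ^ 2)
      =O[𝓝 0] fun t ↦ t ^ 6 := by
  have ho : IsOpen (interior U) := isOpen_interior
  have h0 : (0 : ℝ) ∈ interior U := mem_interior_iff_mem_nhds.mpr hU
  have hfo : ContDiffOn ℝ 5 f (interior U) := hf.mono interior_subset
  have harco : ∀ s ∈ interior U, ‖deriv f s‖ = 1 := fun s hs ↦ harc s (interior_subset hs)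
  have hX : (fun t ↦ f t - f 0) =O[𝓝 0] fun t ↦ t := by
    simpa using ((hf.contDiffAt hU).differentiableAt (by norm_num)).hasDerivAt.isBigO_sub
  have hR : (fun t ↦ (f t - f 0)
      - ∑ k ∈ Finset.Ico 1 5, ((k ! : ℝ)⁻¹ * t ^ k) • iteratedDeriv k f 0)
      =O[𝓝 0] fun t ↦ t ^ 5 := by
    simpa [Finset.sum_range_eq_add_Ico _ (by norm_num : 0 < 5), sub_sub] using
      sub_sum_iteratedDeriv_isBigO (n := 5) hU hf
  have h51 : (fun t : ℝ ↦ t ^ 5) =O[𝓝 0] fun t ↦ t := by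
    simpa using (isLittleO_pow_pow (𝕜 := ℝ) (by norm_num : 1 < 5)).isBigO
  have hpoly := norm_sq_sum_Ico_sub_sq_isBigO (fun k ↦ iteratedDeriv k f 0)
    (by rw [iteratedDeriv_one]; exact harco 0 h0)
    (inner_iteratedDeriv_two_one_eq_zero ho (hfo.of_le (by norm_num)) harco h0)
    (inner_iteratedDeriv_three_one_eq_neg_norm_sq ho (hfo.of_le (by norm_num)) harco h0)
    (inner_iteratedDeriv_four_one_eq_neg_three_mul ho (hfo.of_le (by norm_num)) harco h0)
  exact ((norm_sq_sub_norm_sq_isBigO hX hR h51).congr_right (fun t ↦ by ring)).add hpoly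
    |>.congr_left fun t ↦ sub_add_sub_cancel _ _ _

end InnerProductSpace

theorem euclidean_distance_expansion_of_arclength_curve_general
    (p : ℕ) (γ : ℝ → EuclideanSpace ℝ (Fin p))
    (U : Set ℝ) (hU : U ∈ 𝓝 (0 : ℝ)) (hγ : ContDiffOn ℝ 5 γ U)
    (harc : ∀ s ∈ U, ‖deriv γ s‖ = 1) :
    (fun t : ℝ => ‖γ t - γ 0‖ -
        (t - (‖iteratedDeriv 2 γ 0‖ ^ 2 / 24) * t ^ 3
           - (⟪iteratedDeriv 3 γ 0, iteratedDeriv 2 γ 0⟫ / 24) * t ^ 4))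
      =O[𝓝[>] (0 : ℝ)] fun t => t ^ 5 :=
  isBigO_sub_of_sq_sub (.of_forall fun _ ↦ norm_nonneg _) (by norm_num)
    (eventually_half_abs_le_sub_mul_pow_three_sub_mul_pow_four _ _)
    (((norm_sub_sq_sub_sq_isBigO_of_norm_deriv_eq_one hU hγ harc).congr_right
      fun t ↦ by ring).mono nhdsWithin_le_nhds)

/-- For a unit-speed (arc-length parametrized) `C^5` curve
`γ : ℝ → ℝ^p` near `0`, as `t → 0⁺`,
`‖γ(t) − γ(0)‖ = t − (‖γ″(0)‖²/24)·t³ − (⟨γ‴(0), γ″(0)⟩/24)·t⁴ + O(t⁵)`. -/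
theorem euclidean_distance_expansion_of_arclength_curve
    (p : ℕ) (hp : 1 ≤ p) (γ : ℝ → EuclideanSpace ℝ (Fin p))
    (U : Set ℝ) (hU : U ∈ 𝓝 (0 : ℝ)) (hγ : ContDiffOn ℝ 5 γ U)
    (harc : ∀ s ∈ U, ‖deriv γ s‖ = 1) :
    (fun t : ℝ => ‖γ t - γ 0‖ -
        (t - (‖iteratedDeriv 2 γ 0‖ ^ 2 / 24) * t ^ 3
           - (⟪iteratedDeriv 3 γ 0, iteratedDeriv 2 γ 0⟫ / 24) * t ^ 4))
      =O[𝓝[>] (0 : ℝ)] fun t => t ^ 5 :=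
  euclidean_distance_expansion_of_arclength_curve_general p γ U hU hγ harc
end

section
/- Let p ≥ 1 and let γ : ℝ → ℝ^p be four times continuously differentiable on a neighborhood of 0 with ‖γ′(s)‖ = 1 for all s in that neighborhood. Let Π : ℝ^p → ℝ^p be the orthogonal projection onto the orthogonal complement of the line spanned by γ′(0), and set h(t) := ‖γ(t) − γ(0)‖ (which is positive for all sufficiently small t > 0). Then, as t → 0⁺, | t − ( h(t) + ‖Π(γ(t) − γ(0))‖² / (6·h(t)) ) | = O(t⁴). -/
/-!
Write `T = γ'(0)`, `A = γ''(0)`, `B = γ'''(0)`. Differentiating `‖γ'‖² = 1` twice gives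
`⟪T, A⟫ = 0` and `⟪T, B⟫ = -‖A‖²`. By Taylor, `γ t - γ 0 = t T + t²/2 A + t³/6 B + O(t⁴)`, hence
`h² = t² - ‖A‖² t⁴/12 + O(t⁵)` and, since `Π T = 0` and `Π A = A`,
`‖Π (γ t - γ 0)‖² = ‖A‖² t⁴/4 + O(t⁵)`. Thus `h = t - ‖A‖² t³/24 + O(t⁴)`, while the correction
term equals `‖A‖² t³/24 + O(t⁴)` and cancels the cubic error exactly.
-/

open Asymptotics Filter Topology RealInnerProductSpace
open scoped Nat

theorem isBigO_pow_pow_of_le {𝕜 : Type*} [NormedDivisionRing 𝕜] {m n : ℕ} (h : n ≤ m) :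
    (fun x : 𝕜 => x ^ m) =O[𝓝 0] fun x => x ^ n := by
  rcases h.eq_or_lt with rfl | hlt
  · exact isBigO_refl _ _
  · exact (isLittleO_pow_pow hlt).isBigO

theorem Asymptotics.IsBigO.of_mul_isBigO_mul {α 𝕜 : Type*} [NormedField 𝕜] {l : Filter α}
    {u e w k : α → 𝕜} (h : (fun x => u x * e x) =O[l] fun x => w x * k x) (hw : w =O[l] u)
    (hw0 : ∀ᶠ x in l, w x ≠ 0) : e =O[l] k := by
  have hu0 : ∀ᶠ x in l, u x ≠ 0 := by
    filter_upwards [hw.eq_zero_imp, hw0] with x hwu hwx hux using hwx (hwu hux)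
  have hinv : (fun x => (u x)⁻¹) =O[l] fun x => (w x)⁻¹ :=
    hw.inv_rev (by filter_upwards [hw0] with x hx hx' using absurd hx' hx)
  refine (h.mul hinv).congr' ?_ ?_
  · filter_upwards [hu0] with x hx
    field_simp
  · filter_upwards [hw0] with x hx
    field_simp

theorem taylor_isBigO_of_mem_nhds {E : Type*} [NormedAddCommGroup E] [NormedSpace ℝ E]
    {f : ℝ → E} {x₀ : ℝ} {s : Set ℝ} {n : ℕ} (hs : s ∈ 𝓝 x₀) (hf : ContDiffOn ℝ (n + 1) f s) :
    (fun x => f x - ∑ k ∈ Finset.range (n + 1), ((k ! : ℝ)⁻¹ * (x - x₀) ^ k) • iteratedDeriv k f x₀)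
      =O[𝓝 x₀] fun x => (x - x₀) ^ (n + 1) := by
  obtain ⟨ε, hε, hball⟩ := Metric.mem_nhds_iff.mp hs
  have hx₀ : x₀ ∈ Metric.ball x₀ ε := Metric.mem_ball_self hε
  -- Taylor's theorem to order `n + 1` gives `o`; its top-degree term is itself `O`.
  have hlittle := taylor_isLittleO (n := n + 1) (convex_ball x₀ ε) hx₀
    (by exact_mod_cast hf.mono hball)
  rw [nhdsWithin_eq_nhds.mpr (Metric.isOpen_ball.mem_nhds hx₀)] at hlittle
  have hlast : (fun x => (((n + 1 : ℝ) * n !)⁻¹ * (x - x₀) ^ (n + 1)) •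
      iteratedDerivWithin (n + 1) f (Metric.ball x₀ ε) x₀) =O[𝓝 x₀] fun x => (x - x₀) ^ (n + 1) :=
    ((isBigO_refl _ _).const_mul_left _).smul (isBigO_const_const _ one_ne_zero _) |>.congr_right
      fun x => by simp
  refine (hlittle.isBigO.add hlast).congr_left fun x => ?_
  rw [taylorWithinEval_succ, taylor_within_apply]
  simp only [iteratedDerivWithin_of_isOpen Metric.isOpen_ball hx₀]
  abel

section CubicJet

variable {E : Type*} [NormedAddCommGroup E] [NormedSpace ℝ E]

noncomputable def cubicJet (T A B : E) (t : ℝ) : E := t • T + (t ^ 2 / 2) • A + (t ^ 3 / 6) • B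

theorem isBigO_pow_div_smul_const {m n : ℕ} (h : n ≤ m) (c : ℝ) (v : E) :
    (fun t : ℝ => (t ^ m / c) • v) =O[𝓝 0] fun t => t ^ n :=
  (((isBigO_pow_pow_of_le h).const_mul_left c⁻¹).smul (isBigO_const_const v one_ne_zero _)).congr
    (fun t => by rw [div_eq_inv_mul]) fun t => by simp

theorem cubicJet_isBigO (T A B : E) : cubicJet T A B =O[𝓝 0] fun t => t ^ 1 := by
  have h := ((isBigO_pow_div_smul_const le_rfl 1 T).add
    (isBigO_pow_div_smul_const one_le_two 2 A)).add
    (isBigO_pow_div_smul_const (by norm_num : 1 ≤ 3) 6 B)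
  exact h.congr_left fun t => by simp [cubicJet]

theorem sub_sub_cubicJet_isBigO {γ : ℝ → E} {U : Set ℝ} (hU : U ∈ 𝓝 0)
    (hγ : ContDiffOn ℝ 4 γ U) :
    (fun t => γ t - γ 0 - cubicJet (deriv γ 0) (iteratedDeriv 2 γ 0) (iteratedDeriv 3 γ 0) t)
      =O[𝓝 0] fun t => t ^ 4 := by
  refine (taylor_isBigO_of_mem_nhds (n := 3) hU hγ).congr (fun t => ?_) fun t => by simp
  simp only [Nat.reduceAdd, sub_zero, Finset.sum_range_succ, Finset.range_one,
    Finset.sum_singleton, Nat.factorial, Nat.cast_one, inv_one, pow_zero, mul_one,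
    iteratedDeriv_zero, one_smul, Nat.succ_eq_add_one, zero_add, pow_one, one_mul,
    iteratedDeriv_one, Nat.cast_ofNat, Nat.reduceMul, cubicJet]
  module

end CubicJet

section UnitSpeed

variable {F : Type*} [NormedAddCommGroup F] [InnerProductSpace ℝ F]

theorem inner_add_inner_eq_zero_of_eventually_const {f g : ℝ → F} {f' g' : F} {x c : ℝ}
    (hf : HasDerivAt f f' x) (hg : HasDerivAt g g' x) (hc : ∀ᶠ s in 𝓝 x, ⟪f s, g s⟫ = c) :
    ⟪f x, g'⟫ + ⟪f', g x⟫ = 0 :=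
  (hf.inner ℝ hg).unique ((hasDerivAt_const x c).congr_of_eventuallyEq hc)

theorem inner_deriv_iteratedDeriv_of_norm_deriv_eq_one {γ : ℝ → F} {U : Set ℝ} {x : ℝ}
    (hU : U ∈ 𝓝 x) (hγ : ContDiffOn ℝ 3 γ U) (harc : ∀ s ∈ U, ‖deriv γ s‖ = 1) :
    ⟪deriv γ x, iteratedDeriv 2 γ x⟫ = 0 ∧
      ⟪deriv γ x, iteratedDeriv 3 γ x⟫ = -‖iteratedDeriv 2 γ x‖ ^ 2 := by
  obtain ⟨V, hVU, hV, hxV⟩ := mem_nhds_iff.mp hU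
  have hT : ContDiffOn ℝ 2 (deriv γ) V := (hγ.mono hVU).deriv_of_isOpen hV (by norm_num)
  have hT' : ContDiffOn ℝ 1 (deriv (deriv γ)) V := hT.deriv_of_isOpen hV (by norm_num)
  have hdT : ∀ s ∈ V, HasDerivAt (deriv γ) (deriv (deriv γ) s) s := fun s hs =>
    ((hT.differentiableOn (by norm_num)) s hs).differentiableAt (hV.mem_nhds hs) |>.hasDerivAt
  have hdT' : HasDerivAt (deriv (deriv γ)) (deriv (deriv (deriv γ)) x) x :=
    ((hT'.differentiableOn one_ne_zero) x hxV).differentiableAt (hV.mem_nhds hxV) |>.hasDerivAt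
  have horth : ∀ s ∈ V, ⟪deriv γ s, deriv (deriv γ) s⟫ = 0 := by
    intro s hs
    have := inner_add_inner_eq_zero_of_eventually_const (hdT s hs) (hdT s hs) (c := 1) <| by
      filter_upwards [hV.mem_nhds hs] with r hr
      rw [real_inner_self_eq_norm_sq, harc r (hVU hr), one_pow]
    linarith [real_inner_comm (deriv γ s) (deriv (deriv γ) s)]
  have hsecond := inner_add_inner_eq_zero_of_eventually_const (hdT x hxV) hdT' (c := 0)
    (eventually_of_mem (hV.mem_nhds hxV) horth)
  rw [real_inner_self_eq_norm_sq] at hsecond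
  simp only [iteratedDeriv_succ, iteratedDeriv_zero]
  exact ⟨horth x hxV, by linarith⟩

end UnitSpeed

section InnerProductJet

variable {E F : Type*} [NormedAddCommGroup E] [InnerProductSpace ℝ E]

theorem norm_sq_sub_norm_sq_isBigO_pow {u v : ℝ → E} {m k : ℕ} (hkm : k ≤ m)
    (huv : (fun t => u t - v t) =O[𝓝 0] fun t => t ^ m) (hv : v =O[𝓝 0] fun t => t ^ k) :
    (fun t => ‖u t‖ ^ 2 - ‖v t‖ ^ 2) =O[𝓝 0] fun t => t ^ (m + k) := by
  have hsum : (fun t => u t + v t) =O[𝓝 0] fun t => t ^ k :=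
    ((huv.trans (isBigO_pow_pow_of_le hkm)).add (hv.const_smul_left (2 : ℝ))).congr_left
      fun t => by simp only [Pi.smul_apply]; module
  refine (IsBigO.trans ?_ (huv.norm_left.mul hsum.norm_left)).congr_right fun t => by ring
  refine isBigO_of_le _ fun t => ?_
  have hinner : ‖u t‖ ^ 2 - ‖v t‖ ^ 2 = ⟪u t - v t, u t + v t⟫ := by
    simp only [inner_sub_left, inner_add_right, real_inner_self_eq_norm_sq]
    rw [real_inner_comm (u t) (v t)]
    ring
  rw [hinner, Real.norm_eq_abs, Real.norm_eq_abs, abs_mul, abs_norm, abs_norm]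
  exact abs_real_inner_le_norm _ _

variable {T A B : E}

theorem norm_sq_cubicJet (hT : ‖T‖ = 1) (hTA : ⟪T, A⟫ = 0) (hTB : ⟪T, B⟫ = -‖A‖ ^ 2) (t : ℝ) :
    ‖cubicJet T A B t‖ ^ 2 =
      t ^ 2 - ‖A‖ ^ 2 * t ^ 4 / 12 + (⟪A, B⟫ / 6 * t ^ 5 + ‖B‖ ^ 2 / 36 * t ^ 6) := by
  rw [← real_inner_self_eq_norm_sq]
  simp only [cubicJet, inner_add_left, inner_add_right, real_inner_smul_left, real_inner_smul_right]
  simp only [real_inner_self_eq_norm_sq, real_inner_comm T, hTA, hTB, hT, real_inner_comm A B]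
  ring

variable {Δ : ℝ → E}

theorem norm_sq_sub_isBigO_of_cubicJet (hT : ‖T‖ = 1) (hTA : ⟪T, A⟫ = 0)
    (hTB : ⟪T, B⟫ = -‖A‖ ^ 2)
    (hΔ : (fun t => Δ t - cubicJet T A B t) =O[𝓝 0] fun t => t ^ 4) :
    (fun t => ‖Δ t‖ ^ 2 - (t ^ 2 - ‖A‖ ^ 2 * t ^ 4 / 12)) =O[𝓝 0] fun t => t ^ 5 := by
  have hjet : (fun t => ‖cubicJet T A B t‖ ^ 2 - (t ^ 2 - ‖A‖ ^ 2 * t ^ 4 / 12))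
      =O[𝓝 0] fun t => t ^ 5 := by
    simp only [norm_sq_cubicJet hT hTA hTB, add_sub_cancel_left]
    exact ((isBigO_refl _ _).const_mul_left _).add
      ((isBigO_pow_pow_of_le (by norm_num : 5 ≤ 6)).const_mul_left _)
  exact ((norm_sq_sub_norm_sq_isBigO_pow (by norm_num) hΔ (cubicJet_isBigO T A B)).add
    hjet).congr_left fun t => by ring

variable [NormedAddCommGroup F] [InnerProductSpace ℝ F]

theorem norm_sq_map_sub_isBigO_of_cubicJet (P : E →L[ℝ] F) (hPT : P T = 0)
    (hΔ : (fun t => Δ t - cubicJet T A B t) =O[𝓝 0] fun t => t ^ 4) :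
    (fun t => ‖P (Δ t)‖ ^ 2 - ‖P A‖ ^ 2 * t ^ 4 / 4) =O[𝓝 0] fun t => t ^ 5 := by
  have hmain : (fun t => P (Δ t) - (t ^ 2 / 2) • P A) =O[𝓝 0] fun t => t ^ 3 := by
    refine ((P.isBigO_comp _ _).trans (hΔ.trans (isBigO_pow_pow_of_le (by norm_num)))).add
      (isBigO_pow_div_smul_const le_rfl 6 (P B)) |>.congr_left fun t => ?_
    simp only [cubicJet, map_sub, map_add, map_smul, hPT, smul_zero, zero_add]
    abel
  refine (norm_sq_sub_norm_sq_isBigO_pow (by norm_num) hmain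
    (isBigO_pow_div_smul_const le_rfl 2 (P A))).congr_left fun t => ?_
  rw [norm_smul, Real.norm_eq_abs, abs_of_nonneg (by positivity)]
  ring

end InnerProductJet

section Estimator

variable {h N : ℝ → ℝ} {a : ℝ}

theorem eventually_half_le_of_sq_sub_sq_isLittleO (hh : ∀ t, 0 ≤ h t)
    (hsq : (fun t => h t ^ 2 - t ^ 2) =o[𝓝[>] 0] fun t => t ^ 2) :
    ∀ᶠ t in 𝓝[>] 0, t / 2 ≤ h t := by
  filter_upwards [hsq.bound (by norm_num : (0 : ℝ) < 3 / 4), self_mem_nhdsWithin]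
    with t hbound (ht : 0 < t)
  rw [Real.norm_eq_abs, Real.norm_eq_abs, abs_of_nonneg (sq_nonneg t), abs_le] at hbound
  nlinarith [hh t]

theorem sq_sub_sq_isBigO_of_sq_isBigO
    (hsq : (fun t => h t ^ 2 - (t ^ 2 - a * t ^ 4 / 12)) =O[𝓝[>] 0] fun t => t ^ 5) :
    (fun t => h t ^ 2 - t ^ 2) =O[𝓝[>] 0] fun t => t ^ 4 :=
  ((hsq.trans ((isBigO_pow_pow_of_le (by norm_num : 4 ≤ 5)).mono nhdsWithin_le_nhds)).add
    ((isBigO_refl _ _).const_mul_left (-a / 12))).congr_left fun t => by ring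

theorem sub_isBigO_of_sq_sub_sq_isBigO (hh : ∀ t, 0 ≤ h t)
    (hsq : (fun t => h t ^ 2 - t ^ 2) =O[𝓝[>] 0] fun t => t ^ 4) :
    (fun t => h t - t) =O[𝓝[>] 0] fun t => t ^ 3 := by
  have hpos : ∀ᶠ t in 𝓝[>] (0 : ℝ), 0 < t := self_mem_nhdsWithin
  refine IsBigO.of_mul_isBigO_mul (u := fun t => h t + t) (w := fun t => t)
    (hsq.congr (fun t => by ring) fun t => by ring) ?_ (hpos.mono fun t ht => ht.ne')
  refine IsBigO.of_bound 1 ?_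
  filter_upwards [hpos] with t ht
  rw [Real.norm_eq_abs, Real.norm_eq_abs, abs_of_pos ht, abs_of_pos (by linarith [hh t])]
  linarith [hh t]

theorem sub_add_div_isBigO_of_sq_isBigO (hh : ∀ t, 0 ≤ h t)
    (hhalf : ∀ᶠ t in 𝓝[>] 0, t / 2 ≤ h t)
    (hsq : (fun t => h t ^ 2 - (t ^ 2 - a * t ^ 4 / 12)) =O[𝓝[>] 0] fun t => t ^ 5)
    (hN : (fun t => N t - a * t ^ 4 / 4) =O[𝓝[>] 0] fun t => t ^ 5) :
    (fun t => t - (h t + N t / (6 * h t))) =O[𝓝[>] 0] fun t => t ^ 4 := by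
  have hpow {m n : ℕ} (hnm : n ≤ m) : (fun t : ℝ => t ^ m) =O[𝓝[>] 0] fun t => t ^ n :=
    (isBigO_pow_pow_of_le hnm).mono nhdsWithin_le_nhds
  have hpos : ∀ᶠ t in 𝓝[>] (0 : ℝ), 0 < t := self_mem_nhdsWithin
  have hdiff := sub_isBigO_of_sq_sub_sq_isBigO hh (sq_sub_sq_isBigO_of_sq_isBigO hsq)
  have hh1 : h =O[𝓝[>] 0] fun t => t ^ 1 :=
    ((hdiff.trans (hpow (by norm_num : 1 ≤ 3))).add (hpow le_rfl)).congr_left fun t => by ring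
  have hsum1 : (fun t => t + h t) =O[𝓝[>] 0] fun t => t ^ 1 :=
    ((hpow le_rfl).add hh1).congr_left fun t => by ring
  -- With `S`, `Y` the `O(t⁵)` errors in `hsq`, `hN` and `E` the estimator's error,
  -- `24 h (t + h) E = -24 h S - 4 (t + h) Y + a t⁴ (h - t)`, and each term is `O(t⁶)`.
  have hprod : (fun t => 24 * h t * (t + h t) * (t - (h t + N t / (6 * h t))))
      =O[𝓝[>] 0] fun t => t ^ 2 * t ^ 4 := by
    have hterm₁ := (hh1.mul hsq).const_mul_left (-24)
    have hterm₂ := (hsum1.mul hN).const_mul_left (-4)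
    have hterm₃ := (((isBigO_refl (fun t : ℝ => t ^ 4) _).mul hdiff).trans
      ((hpow (by norm_num : 6 ≤ 7)).congr_left fun t => by ring)).const_mul_left a
    refine ((hterm₁.add hterm₂).add (hterm₃.congr_right fun t => by ring)).congr' ?_
      (.of_forall fun t => by ring)
    filter_upwards [hhalf, hpos] with t ht ht0
    have : h t ≠ 0 := by linarith
    field_simp
    ring
  refine hprod.of_mul_isBigO_mul ?_ (hpos.mono fun t ht => by positivity)
  refine IsBigO.of_bound 1 ?_
  filter_upwards [hhalf, hpos] with t ht ht0
  rw [Real.norm_eq_abs, Real.norm_eq_abs, abs_of_pos (by positivity), abs_of_pos (by nlinarith)]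
  nlinarith

theorem eventually_pos_and_sub_add_div_isBigO (hh : ∀ t, 0 ≤ h t)
    (hsq : (fun t => h t ^ 2 - (t ^ 2 - a * t ^ 4 / 12)) =O[𝓝[>] 0] fun t => t ^ 5)
    (hN : (fun t => N t - a * t ^ 4 / 4) =O[𝓝[>] 0] fun t => t ^ 5) :
    (∀ᶠ t in 𝓝[>] 0, 0 < h t) ∧
      (fun t => |t - (h t + N t / (6 * h t))|) =O[𝓝[>] 0] fun t => t ^ 4 := by
  have hhalf := eventually_half_le_of_sq_sub_sq_isLittleO hh
    ((sq_sub_sq_isBigO_of_sq_isBigO hsq).trans_isLittleO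
      ((isLittleO_pow_pow (by norm_num : 2 < 4)).mono nhdsWithin_le_nhds))
  refine ⟨?_, (sub_add_div_isBigO_of_sq_isBigO hh hhalf hsq hN).abs_left⟩
  filter_upwards [hhalf, self_mem_nhdsWithin] with t ht (ht0 : 0 < t)
  linarith

end Estimator

theorem covariance_corrected_geodesic_estimator_curve_general
    (p : ℕ) (γ : ℝ → EuclideanSpace ℝ (Fin p))
    (U : Set ℝ) (hU : U ∈ 𝓝 (0 : ℝ)) (hγ : ContDiffOn ℝ 4 γ U)
    (harc : ∀ s ∈ U, ‖deriv γ s‖ = 1) :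
    (∀ᶠ t in 𝓝[>] (0 : ℝ), 0 < ‖γ t - γ 0‖) ∧
    (fun t : ℝ =>
        |t - (‖γ t - γ 0‖ +
          ‖(Submodule.orthogonalProjection ((Submodule.span ℝ {deriv γ 0})ᗮ) (γ t - γ 0) :
              EuclideanSpace ℝ (Fin p))‖ ^ 2 / (6 * ‖γ t - γ 0‖))|)
      =O[𝓝[>] (0 : ℝ)] fun t => t ^ 4 := by
  set K := (Submodule.span ℝ {deriv γ 0})ᗮ
  obtain ⟨hTA, hTB⟩ :=
    inner_deriv_iteratedDeriv_of_norm_deriv_eq_one hU (hγ.of_le (by norm_num)) harc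
  have hΔ := sub_sub_cubicJet_isBigO hU hγ
  have hPT : K.orthogonalProjectionOnto (deriv γ 0) = 0 :=
    Submodule.orthogonalProjectionOnto_apply_of_mem_orthogonal
      (Submodule.le_orthogonal_orthogonal _ (Submodule.mem_span_singleton_self _))
  have hPA : K.orthogonalProjectionOnto (iteratedDeriv 2 γ 0) =
      ⟨_, Submodule.mem_orthogonal_singleton_iff_inner_right.mpr hTA⟩ :=
    Submodule.orthogonalProjectionOnto_mem_subspace_eq_self ⟨_, _⟩
  have hnorm := norm_sq_sub_isBigO_of_cubicJet (harc 0 (mem_of_mem_nhds hU)) hTA hTB hΔ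
  have hproj := norm_sq_map_sub_isBigO_of_cubicJet K.orthogonalProjectionOnto hPT hΔ
  rw [hPA] at hproj
  exact eventually_pos_and_sub_add_div_isBigO (fun t => norm_nonneg _)
    (hnorm.mono nhdsWithin_le_nhds) (hproj.mono nhdsWithin_le_nhds)

/-- For a unit-speed `C^4` curve `γ : ℝ → ℝ^p` near `0`, with
`Π` the orthogonal projection onto the orthogonal complement of the line
spanned by `γ′(0)` and `h(t) := ‖γ(t) − γ(0)‖` (positive for small `t > 0`),
as `t → 0⁺`, `| t − ( h(t) + ‖Π(γ(t) − γ(0))‖²/(6·h(t)) ) | = O(t⁴)`. -/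
theorem covariance_corrected_geodesic_estimator_curve
    (p : ℕ) (hp : 1 ≤ p) (γ : ℝ → EuclideanSpace ℝ (Fin p))
    (U : Set ℝ) (hU : U ∈ 𝓝 (0 : ℝ)) (hγ : ContDiffOn ℝ 4 γ U)
    (harc : ∀ s ∈ U, ‖deriv γ s‖ = 1) :
    (∀ᶠ t in 𝓝[>] (0 : ℝ), 0 < ‖γ t - γ 0‖) ∧
    (fun t : ℝ =>
        |t - (‖γ t - γ 0‖ +
          ‖(Submodule.orthogonalProjection ((Submodule.span ℝ {deriv γ 0})ᗮ) (γ t - γ 0) :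
              EuclideanSpace ℝ (Fin p))‖ ^ 2 / (6 * ‖γ t - γ 0‖))|)
      =O[𝓝[>] (0 : ℝ)] fun t => t ^ 4 :=
  covariance_corrected_geodesic_estimator_curve_general p γ U hU hγ harc
end

section
/- Let d ≥ 1, let Ω ⊆ ℝ^d be open, let x ∈ Ω, let Φ : Ω → ℝ^d be three times continuously differentiable, and let P : Ω → ℝ be twice continuously differentiable with P(x) > 0 and P ≥ 0 on Ω. Then, as ε → 0⁺, [∫_{B_ε(x)} (Φ(u) − Φ(x))(Φ(u) − Φ(x))ᵀ P(u) du] / (ε² ∫_{B_ε(x)} P(u) du) = (1/(d+2))·DΦ(x)·DΦ(x)ᵀ + O(ε²). -/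
open Asymptotics Filter Topology MeasureTheory Metric Matrix

/-- The Jacobian matrix `DΦ(x)` of `Φ : ℝ^d → ℝ^d` at `x`. -/
noncomputable def jacobianMatrix {d : ℕ}
    (Φ : EuclideanSpace ℝ (Fin d) → EuclideanSpace ℝ (Fin d))
    (x : EuclideanSpace ℝ (Fin d)) : Matrix (Fin d) (Fin d) ℝ :=
  Matrix.of fun i j => fderiv ℝ Φ x (EuclideanSpace.single j 1) i

open Module Set

/-!
Translate `x` to the origin and pair `v` with `-v`. Writing each factor of the integrand
`(Φ u - Φ x)ᵢ (Φ u - Φ x)ⱼ P u` as (sum + difference)/2 of its values at `x ± v`, Taylor's theorem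
(`Φ` of class `C³`, `P` of class `C²`) shows that the odd third-order terms cancel, so the
symmetrized integrand is `2 P(x) (DΦ(x) v)ᵢ (DΦ(x) v)ⱼ + O(‖v‖⁴)`; likewise
`P(x + v) + P(x - v) = 2 P(x) + O(‖v‖²)`. Integrating over `B_ε(0)`, where by symmetry
`∫ vₖ vₗ = δₖₗ ω ε^(d+2) / (d+2)` with `ω = |B_1|`, the numerator is
`P(x) (DΦ DΦᵀ)ᵢⱼ ω ε^(d+2) / (d+2) + O(ε^(d+4))` and the denominator is `P(x) ω ε^d + O(ε^(d+2))`.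
-/

section Taylor

variable {E F : Type*} [NormedAddCommGroup E] [NormedSpace ℝ E]
  [NormedAddCommGroup F] [NormedSpace ℝ F]

theorem isBigO_sub_of_hasFDerivAt_isBigO {h : E → F} {h' : E → E →L[ℝ] F} {k : ℕ}
    (hh : ∀ᶠ v in 𝓝 0, HasFDerivAt h (h' v) v) (hh' : h' =O[𝓝 0] fun v => ‖v‖ ^ k) :
    (fun v => h v - h 0) =O[𝓝 0] fun v => ‖v‖ ^ (k + 1) := by
  obtain ⟨C, hC, hCh'⟩ := hh'.exists_nonneg
  obtain ⟨r, hr, hball⟩ := Metric.eventually_nhds_iff_ball.1 (hh.and hCh'.bound)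
  refine .of_bound C (Metric.eventually_nhds_iff_ball.2 ⟨r, hr, fun v hv => ?_⟩)
  have hsub : closedBall (0 : E) ‖v‖ ⊆ ball 0 r :=
    closedBall_subset_ball (by simpa using hv)
  have hbound : ∀ w ∈ closedBall (0 : E) ‖v‖, ‖h' w‖ ≤ C * ‖v‖ ^ k := fun w hw => by
    have hw' : ‖w‖ ≤ ‖v‖ := by simpa using hw
    calc ‖h' w‖ ≤ C * ‖‖w‖ ^ k‖ := (hball w (hsub hw)).2
      _ ≤ C * ‖v‖ ^ k := by gcongr; simpa using pow_le_pow_left₀ (norm_nonneg w) hw' k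
  have hmv := (convex_closedBall (0 : E) ‖v‖).norm_image_sub_le_of_norm_hasFDerivWithin_le
    (fun w hw => (hball w (hsub hw)).1.hasFDerivWithinAt) hbound
    (mem_closedBall_self (norm_nonneg v)) (by simp : v ∈ closedBall (0 : E) ‖v‖)
  simpa [pow_succ, mul_assoc] using hmv

theorem DifferentiableAt.isBigO_comp_add_sub {f : E → F} {x : E} (hf : DifferentiableAt ℝ f x) :
    (fun v => f (x + v) - f x) =O[𝓝 0] fun v => ‖v‖ := by
  refine isBigO_norm_right.2 ((hf.hasFDerivAt.isBigO_sub.comp_tendsto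
    ((continuous_const_add x).tendsto' 0 x (add_zero x))).congr_right ?_)
  simp

theorem ContDiffAt.isBigO_sub_sub_fderiv {f : E → F} {x : E} (hf : ContDiffAt ℝ 2 f x) :
    (fun v => f (x + v) - f x - fderiv ℝ f x v) =O[𝓝 0] fun v => ‖v‖ ^ 2 := by
  have hdiff : ∀ᶠ v in 𝓝 (0 : E), HasFDerivAt (fun v => f (x + v) - fderiv ℝ f x v)
      (fderiv ℝ f (x + v) - fderiv ℝ f x) v := by
    refine (((continuous_const_add x).tendsto' 0 x (add_zero x)).eventually (hf.eventually (by simp))).mono fun v hv => ?_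
    exact ((hasFDerivAt_comp_add_left x).2
      (hv.differentiableAt (by norm_num)).hasFDerivAt).sub (fderiv ℝ f x).hasFDerivAt
  have hder := ((hf.fderiv_right (m := 1) (by norm_num)).differentiableAt
    (by norm_num)).isBigO_comp_add_sub
  simpa [sub_right_comm] using isBigO_sub_of_hasFDerivAt_isBigO hdiff (by simpa using hder)

theorem ContDiffAt.isBigO_second_difference {f : E → F} {x : E} (hf : ContDiffAt ℝ 2 f x) :
    (fun v => f (x + v) + f (x - v) - (2 : ℝ) • f x) =O[𝓝 0] fun v => ‖v‖ ^ 2 := by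
  have hneg : (fun v => f (x + -v) - f x - fderiv ℝ f x (-v)) =O[𝓝 0] fun v => ‖v‖ ^ 2 :=
    (hf.isBigO_sub_sub_fderiv.comp_tendsto (continuous_neg.tendsto' 0 0 neg_zero)).congr_right
      fun v => by simp
  refine (hf.isBigO_sub_sub_fderiv.add hneg).congr_left fun v => ?_
  simp only [map_neg, ← sub_eq_add_neg]
  rw [two_smul]; abel

theorem ContDiffAt.isBigO_central_difference {f : E → F} {x : E} (hf : ContDiffAt ℝ 3 f x) :
    (fun v => f (x + v) - f (x - v) - (2 : ℝ) • fderiv ℝ f x v) =O[𝓝 0]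
      fun v => ‖v‖ ^ 3 := by
  have hplus := (continuous_const_add x).tendsto' 0 x (add_zero x)
  have hminus := (continuous_sub_left x).tendsto' 0 x (sub_zero x)
  have hdiff : ∀ᶠ v in 𝓝 (0 : E), HasFDerivAt
      (fun v => f (x + v) - f (x - v) - (2 : ℝ) • fderiv ℝ f x v)
      (fderiv ℝ f (x + v) + fderiv ℝ f (x - v) - (2 : ℝ) • fderiv ℝ f x) v := by
    have hf' := hf.eventually (by simp)
    filter_upwards [hplus.eventually hf', hminus.eventually hf'] with v hp hm
    have hp' := (hasFDerivAt_comp_add_left x).2 (hp.differentiableAt (by norm_num)).hasFDerivAt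
    have hm' := (hm.differentiableAt (by norm_num)).hasFDerivAt.comp v
      ((hasFDerivAt_const x v).sub (hasFDerivAt_id v))
    convert (hp'.sub hm').sub ((fderiv ℝ f x).hasFDerivAt.const_smul (2 : ℝ)) using 1
    · rfl
    · ext w
      simp
  have hsecond := (hf.fderiv_right (m := 2) (by norm_num)).isBigO_second_difference
  simpa using isBigO_sub_of_hasFDerivAt_isBigO hdiff hsecond

end Taylor

theorem isBigO_pow_of_le {α : Type*} {l : Filter α} {s : α → ℝ} (hs : Tendsto s l (𝓝 0))
    {m n : ℕ} (hmn : m ≤ n) : (fun t => s t ^ n) =O[l] fun t => s t ^ m := by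
  have h := (isBigO_refl (fun t => s t ^ m) l).mul ((hs.isBigO_one ℝ).pow (n - m))
  refine h.congr (fun t => ?_) fun t => by simp
  rw [← pow_add, Nat.add_sub_cancel' hmn]

/-- `u₂, w₂, π₂` play the role of `u, w, π` at the reflected point, `U, W` of the linear parts of
`u, w`, and `p` of the value of `π` at the centre. -/
theorem isBigO_mul_mul_add_mul_mul_sub {α : Type*} {l : Filter α} {s : α → ℝ}
    (hs : Tendsto s l (𝓝 0)) {u₁ u₂ w₁ w₂ π₁ π₂ U W : α → ℝ} {p : ℝ}
    (hu : (fun t => u₁ t + u₂ t) =O[l] fun t => s t ^ 2)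
    (hu' : (fun t => u₁ t - u₂ t - 2 * U t) =O[l] fun t => s t ^ 3)
    (hU : U =O[l] s)
    (hw : (fun t => w₁ t + w₂ t) =O[l] fun t => s t ^ 2)
    (hw' : (fun t => w₁ t - w₂ t - 2 * W t) =O[l] fun t => s t ^ 3)
    (hW : W =O[l] s)
    (hπ : (fun t => π₁ t + π₂ t - 2 * p) =O[l] fun t => s t ^ 2)
    (hπ' : (fun t => π₁ t - π₂ t) =O[l] s) :
    (fun t => u₁ t * w₁ t * π₁ t + u₂ t * w₂ t * π₂ t - 2 * (p * (U t * W t))) =O[l]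
      fun t => s t ^ 4 := by
  have hodd : ∀ {y₁ y₂ Y : α → ℝ}, (fun t => y₁ t - y₂ t - 2 * Y t) =O[l] (fun t => s t ^ 3) →
      Y =O[l] s → (fun t => y₁ t - y₂ t) =O[l] s := fun hy hY =>
    ((hy.trans ((isBigO_pow_of_le hs (by norm_num : 1 ≤ 3)).congr_right (by simp))).add
      (hY.const_mul_left 2)).congr_left fun t => by ring
  have hπb : (fun t => π₁ t + π₂ t) =O[l] fun _ => (1 : ℝ) :=
    ((hπ.trans (((hs.isBigO_one ℝ).pow 2).congr_right (by simp))).add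
      (isBigO_const_const (2 * p) one_ne_zero l)).congr_left fun t => by ring
  have huo := hodd hu' hU
  have hwo := hodd hw' hW
  have h4 : ∀ {f g : α → ℝ}, f =O[l] g → (∀ t, g t = s t ^ 4) → f =O[l] fun t => s t ^ 4 :=
    fun hf hg => hf.congr_right hg
  -- only the products with an even number of odd parts survive the symmetrization
  have key := ((((((h4 ((hu.mul hw).mul hπb) fun t => by ring).add
    (h4 ((hu.mul hwo).mul hπ') fun t => by ring)).add
    (h4 ((huo.mul hw).mul hπ') fun t => by ring)).add
    (h4 ((huo.mul hwo).mul hπ) fun t => by ring)).add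
    (h4 ((hu'.mul hwo).const_mul_left (2 * p)) fun t => by ring)).add
    (h4 ((hU.mul hw').const_mul_left (4 * p)) fun t => by ring)).const_mul_left (1 / 4)
  exact key.congr_left fun t => by ring

theorem ContDiffAt.isBigO_even_part_covariance_integrand {E ι : Type*} [NormedAddCommGroup E]
    [NormedSpace ℝ E] [Fintype ι] {Φ : E → EuclideanSpace ℝ ι} {P : E → ℝ} {x : E}
    (hΦ : ContDiffAt ℝ 3 Φ x) (hP : ContDiffAt ℝ 2 P x) (i j : ι) :
    (fun v => (Φ (x + v) - Φ x) i * (Φ (x + v) - Φ x) j * P (x + v) +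
        (Φ (x - v) - Φ x) i * (Φ (x - v) - Φ x) j * P (x - v) -
        2 * (P x * (fderiv ℝ Φ x v i * fderiv ℝ Φ x v j))) =O[𝓝 0] fun v => ‖v‖ ^ 4 := by
  have coord : ∀ {f : E → EuclideanSpace ℝ ι} {g : E → ℝ} (k : ι), f =O[𝓝 0] g →
      (fun v => f v k) =O[𝓝 0] g := fun {f} _ k hf =>
    ((EuclideanSpace.proj (𝕜 := ℝ) k).isBigO_comp f _).trans hf
  have hΦ2 : ContDiffAt ℝ 2 Φ x := hΦ.of_le (by norm_num)
  have heven : ∀ k, (fun v => (Φ (x + v) - Φ x) k + (Φ (x - v) - Φ x) k) =O[𝓝 0]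
      fun v => ‖v‖ ^ 2 := fun k =>
    (coord k hΦ2.isBigO_second_difference).congr_left fun v => by simp; ring
  have hodd : ∀ k, (fun v => (Φ (x + v) - Φ x) k - (Φ (x - v) - Φ x) k -
      2 * fderiv ℝ Φ x v k) =O[𝓝 0] fun v => ‖v‖ ^ 3 := fun k =>
    (coord k hΦ.isBigO_central_difference).congr_left fun v => by simp
  have hlin : ∀ k, (fun v => fderiv ℝ Φ x v k) =O[𝓝 0] fun v => ‖v‖ := fun k =>
    coord k (isBigO_norm_right.2 ((fderiv ℝ Φ x).isBigO_id _))
  have hPeven : (fun v => P (x + v) + P (x - v) - 2 * P x) =O[𝓝 0] fun v => ‖v‖ ^ 2 := by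
    simpa using hP.isBigO_second_difference
  have hPdiff := (hP.differentiableAt (by norm_num)).isBigO_comp_add_sub
  have hPodd : (fun v => P (x + v) - P (x - v)) =O[𝓝 0] fun v => ‖v‖ :=
    (hPdiff.sub ((hPdiff.comp_tendsto (continuous_neg.tendsto' 0 0 neg_zero)).congr_right
      fun v => by simp)).congr_left fun v => by simp [sub_eq_add_neg]
  exact isBigO_mul_mul_add_mul_mul_sub (tendsto_norm_zero) (heven i) (hodd i) (hlin i)
    (heven j) (hodd j) (hlin j) hPeven hPodd

section BallIntegrals

variable {E F : Type*} [NormedAddCommGroup E] [MeasurableSpace E] [BorelSpace E] (μ : Measure E)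
  [NormedAddCommGroup F]

theorem eventually_integrableOn_closedBall [ProperSpace E] [IsFiniteMeasureOnCompacts μ]
    {f : E → F} {x : E}
    (hf : ∀ᶠ u in 𝓝 x, ContinuousAt f u) :
    ∀ᶠ ε in 𝓝 (0 : ℝ), IntegrableOn f (closedBall x ε) μ := by
  obtain ⟨r, hr, hball⟩ := Metric.eventually_nhds_iff_ball.1 hf
  filter_upwards [Iio_mem_nhds hr] with ε hε
  exact (ContinuousOn.integrableOn_compact (isCompact_closedBall x ε) fun u hu =>
    (hball u (closedBall_subset_ball hε hu)).continuousWithinAt)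

variable [NormedSpace ℝ F]

theorem setIntegral_closedBall_comp_add_left [μ.IsAddLeftInvariant] (f : E → F) (x : E) (ε : ℝ) :
    ∫ u in closedBall x ε, f u ∂μ = ∫ v in closedBall 0 ε, f (x + v) ∂μ := by
  have hpre : (fun v => x + v) ⁻¹' closedBall x ε = closedBall 0 ε := by
    ext v; simp [dist_eq_norm]
  rw [← (measurePreserving_add_left μ x).setIntegral_preimage_emb
    (MeasurableEquiv.addLeft x).measurableEmbedding f, hpre]

theorem setIntegral_closedBall_comp_neg [μ.IsNegInvariant] (f : E → F) (ε : ℝ) :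
    ∫ v in closedBall 0 ε, f (-v) ∂μ = ∫ v in closedBall 0 ε, f v ∂μ := by
  have hpre : Neg.neg ⁻¹' closedBall (0 : E) ε = closedBall 0 ε := by
    ext v; simp
  rw [← (Measure.measurePreserving_neg μ).setIntegral_preimage_emb
    (MeasurableEquiv.neg E).measurableEmbedding f, hpre]

variable [NormedSpace ℝ E] [FiniteDimensional ℝ E] [μ.IsAddHaarMeasure]

theorem isBigO_setIntegral_closedBall {f : E → F} {k : ℕ}
    (hf : f =O[𝓝 0] fun v => ‖v‖ ^ k) :
    (fun ε => ∫ v in closedBall (0 : E) ε, f v ∂μ) =O[𝓝[>] 0]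
      fun ε => ε ^ (finrank ℝ E + k) := by
  obtain ⟨C, hC, hCf⟩ := hf.exists_nonneg
  obtain ⟨r, hr, hball⟩ := Metric.eventually_nhds_iff_ball.1 hCf.bound
  refine .of_bound (C * μ.real (closedBall 0 1)) ?_
  filter_upwards [Ioo_mem_nhdsGT hr] with ε ⟨hε, hεr⟩
  have hbound : ∀ v ∈ closedBall (0 : E) ε, ‖f v‖ ≤ C * ε ^ k := fun v hv => by
    have hv' : ‖v‖ ≤ ε := by simpa using hv
    calc ‖f v‖ ≤ C * ‖‖v‖ ^ k‖ := hball v (closedBall_subset_ball hεr hv)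
      _ ≤ C * ε ^ k := by gcongr; simpa using pow_le_pow_left₀ (norm_nonneg v) hv' k
  calc ‖∫ v in closedBall (0 : E) ε, f v ∂μ‖
      ≤ C * ε ^ k * μ.real (closedBall 0 ε) :=
        norm_setIntegral_le_of_norm_le_const measure_closedBall_lt_top hbound
    _ = C * μ.real (closedBall 0 1) * ‖ε ^ (finrank ℝ E + k)‖ := by
        rw [Measure.addHaar_real_closedBall' μ 0 hε.le, Real.norm_of_nonneg (by positivity),
          pow_add]
        ring

theorem isBigO_setIntegral_closedBall_of_even {f : E → F} {k : ℕ}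
    (hf : ∀ᶠ ε in 𝓝 (0 : ℝ), IntegrableOn f (closedBall 0 ε) μ)
    (heven : (fun v => f v + f (-v)) =O[𝓝 0] fun v => ‖v‖ ^ k) :
    (fun ε => ∫ v in closedBall (0 : E) ε, f v ∂μ) =O[𝓝[>] 0]
      fun ε => ε ^ (finrank ℝ E + k) := by
  refine ((isBigO_setIntegral_closedBall μ heven).const_smul_left (2 : ℝ)⁻¹).congr'
    ?_ EventuallyEq.rfl
  filter_upwards [nhdsWithin_le_nhds hf] with ε hε
  simp only [Pi.smul_apply]
  have hneg : IntegrableOn (fun v => f (-v)) (closedBall 0 ε) μ := by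
    simpa using hε.comp_neg
  rw [integral_add hε hneg, setIntegral_closedBall_comp_neg, ← two_smul ℝ, smul_smul]
  norm_num

theorem isBigO_setIntegral_closedBall_sub {Ψ h : E → F} {x : E} {k : ℕ}
    (hΨ : ∀ᶠ u in 𝓝 x, ContinuousAt Ψ u) (hh : Continuous h) (h_even : ∀ v, h (-v) = h v)
    (hΨh : (fun v => Ψ (x + v) + Ψ (x - v) - (2 : ℝ) • h v) =O[𝓝 0] fun v => ‖v‖ ^ k) :
    (fun ε => ∫ u in closedBall x ε, Ψ u ∂μ - ∫ v in closedBall 0 ε, h v ∂μ) =O[𝓝[>] 0]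
      fun ε => ε ^ (finrank ℝ E + k) := by
  have hcont : ∀ᶠ v in 𝓝 (0 : E), ContinuousAt (fun v => Ψ (x + v) - h v) v :=
    (((continuous_const_add x).tendsto' 0 x (add_zero x)).eventually hΨ).mono fun v hv =>
      (hv.comp (continuous_const_add x).continuousAt).sub hh.continuousAt
  have hint := eventually_integrableOn_closedBall μ (f := h) (x := 0)
    (Eventually.of_forall fun v => hh.continuousAt)
  refine (isBigO_setIntegral_closedBall_of_even μ (eventually_integrableOn_closedBall μ hcont)
    ((hΨh.congr_left fun v => ?_))).congr' ?_ EventuallyEq.rfl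
  · rw [h_even, sub_eq_add_neg x, two_smul]; abel
  · filter_upwards [nhdsWithin_le_nhds (eventually_integrableOn_closedBall μ hcont),
      nhdsWithin_le_nhds hint] with ε hε hεh
    rw [setIntegral_closedBall_comp_add_left μ Ψ x, ← integral_sub ((hε.add hεh).congr_fun
      (fun v _ => sub_add_cancel _ _) measurableSet_closedBall) hεh]

theorem ContDiffAt.isBigO_setIntegral_closedBall_sub_mul_measure {P : E → ℝ} {x : E}
    (hP : ContDiffAt ℝ 2 P x) :
    (fun ε => ∫ u in closedBall x ε, P u ∂μ - P x * μ.real (closedBall 0 1) * ε ^ finrank ℝ E)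
      =O[𝓝[>] 0] fun ε => ε ^ (finrank ℝ E + 2) := by
  refine (isBigO_setIntegral_closedBall_sub μ (h := fun _ => P x)
    ((hP.eventually (by simp)).mono fun u hu => hu.continuousAt) continuous_const
    (fun _ => rfl) hP.isBigO_second_difference).congr' ?_ EventuallyEq.rfl
  filter_upwards [self_mem_nhdsWithin] with ε (hε : 0 < ε)
  rw [setIntegral_const, Measure.addHaar_real_closedBall' μ 0 hε.le, smul_eq_mul]
  ring

end BallIntegrals

theorem integral_closedBall_norm_sq {E : Type*} [NormedAddCommGroup E] [NormedSpace ℝ E]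
    [FiniteDimensional ℝ E] [Nontrivial E] [MeasurableSpace E] [BorelSpace E]
    (μ : Measure E) [μ.IsAddHaarMeasure] {ε : ℝ} (hε : 0 ≤ ε) :
    ∫ v in closedBall (0 : E) ε, ‖v‖ ^ 2 ∂μ =
      finrank ℝ E * μ.real (closedBall 0 1) * ε ^ (finrank ℝ E + 2) / (finrank ℝ E + 2) := by
  have hd : 1 ≤ finrank ℝ E := finrank_pos
  have hball : (closedBall (0 : E) ε).indicator (fun v => ‖v‖ ^ 2) =
      fun v => (fun t : ℝ => if t ≤ ε then t ^ 2 else 0) ‖v‖ := by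
    ext v; simp [indicator]
  have hradial : ∫ t in Ioi (0 : ℝ), t ^ (finrank ℝ E - 1) • (if t ≤ ε then t ^ 2 else 0) =
      ∫ t in (0 : ℝ)..ε, t ^ (finrank ℝ E + 1) := by
    rw [intervalIntegral.integral_of_le hε, ← Ioi_inter_Iic,
      ← setIntegral_indicator measurableSet_Iic]
    refine setIntegral_congr_fun measurableSet_Ioi fun t _ => ?_
    simp only [indicator, mem_Iic, smul_eq_mul]
    split_ifs
    · rw [← pow_add]; congr 1; omega
    · simp
  rw [← integral_indicator measurableSet_closedBall, hball, integral_fun_norm_addHaar, hradial,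
    integral_pow, ← Measure.addHaar_real_closedBall_eq_addHaar_real_ball]
  push_cast
  simp only [nsmul_eq_mul, smul_eq_mul]
  ring

theorem setIntegral_closedBall_comp_linearIsometryEquiv {E F : Type*} [NormedAddCommGroup E]
    [InnerProductSpace ℝ E] [FiniteDimensional ℝ E] [MeasurableSpace E] [BorelSpace E]
    [NormedAddCommGroup F] [NormedSpace ℝ F] (e : E ≃ₗᵢ[ℝ] E) (f : E → F) (ε : ℝ) :
    ∫ v in closedBall (0 : E) ε, f (e v) = ∫ v in closedBall (0 : E) ε, f v := by
  have hpre : e ⁻¹' closedBall (0 : E) ε = closedBall 0 ε := by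
    ext v; simp
  rw [← e.measurePreserving.setIntegral_preimage_emb e.toHomeomorph.measurableEmbedding f, hpre]

section Coordinates

variable {ι : Type*} [Fintype ι]

theorem integral_closedBall_coord_sq {ε : ℝ} (hε : 0 ≤ ε) (k : ι) :
    ∫ v in closedBall (0 : EuclideanSpace ℝ ι) ε, v k ^ 2 =
      volume.real (closedBall (0 : EuclideanSpace ℝ ι) 1) * ε ^ (Fintype.card ι + 2) /
        (Fintype.card ι + 2) := by
  classical
  have : Nonempty ι := ⟨k⟩
  have hswap : ∀ q : ι, ∫ v in closedBall (0 : EuclideanSpace ℝ ι) ε, v q ^ 2 =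
      ∫ v in closedBall (0 : EuclideanSpace ℝ ι) ε, v k ^ 2 := fun q => by
    rw [← setIntegral_closedBall_comp_linearIsometryEquiv
      (LinearIsometryEquiv.piLpCongrLeft 2 ℝ ℝ (Equiv.swap k q)) (fun v => v k ^ 2)]
    simp
  have hsum := integral_closedBall_norm_sq (volume : Measure (EuclideanSpace ℝ ι)) hε
  simp_rw [EuclideanSpace.norm_sq_eq, Real.norm_eq_abs, sq_abs] at hsum
  rw [integral_finsetSum _ fun q _ => (by fun_prop : Continuous fun v : EuclideanSpace ℝ ι =>
      v q ^ 2).continuousOn.integrableOn_compact (isCompact_closedBall _ _), Finset.sum_congr rfl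
      fun q _ => hswap q, Finset.sum_const, Finset.card_univ, nsmul_eq_mul,
      finrank_euclideanSpace] at hsum
  have hcard : (Fintype.card ι : ℝ) ≠ 0 := by positivity
  field_simp at hsum ⊢
  linarith

theorem integral_closedBall_coord_mul_coord_of_ne (ε : ℝ) {k l : ι}
    (hkl : k ≠ l) : ∫ v in closedBall (0 : EuclideanSpace ℝ ι) ε, v k * v l = 0 := by
  classical
  have hreflect := setIntegral_closedBall_comp_linearIsometryEquiv
    (LinearIsometryEquiv.piLpCongrRight 2 fun q : ι =>
      if q = k then LinearIsometryEquiv.neg ℝ else LinearIsometryEquiv.refl ℝ ℝ)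
    (fun v => v k * v l) ε
  simp [Ne.symm hkl, integral_neg] at hreflect
  linarith

end Coordinates

theorem fderiv_apply_eq_sum_jacobianMatrix {d : ℕ}
    (Φ : EuclideanSpace ℝ (Fin d) → EuclideanSpace ℝ (Fin d)) (x v : EuclideanSpace ℝ (Fin d))
    (i : Fin d) : fderiv ℝ Φ x v i = ∑ k, jacobianMatrix Φ x i k * v k := by
  conv_lhs => rw [← (EuclideanSpace.basisFun (Fin d) ℝ).sum_repr v]
  simp [jacobianMatrix, mul_comm]

theorem integral_closedBall_sum_mul_sum {ι m : Type*} [Fintype ι]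
    (M : Matrix m ι ℝ) (i j : m) {ε : ℝ} (hε : 0 ≤ ε) :
    ∫ v in closedBall (0 : EuclideanSpace ℝ ι) ε, (∑ k, M i k * v k) * (∑ k, M j k * v k) =
      (M * Mᵀ) i j * (volume.real (closedBall (0 : EuclideanSpace ℝ ι) 1) *
        ε ^ (Fintype.card ι + 2) / (Fintype.card ι + 2)) := by
  classical
  have hint : ∀ k l, IntegrableOn (fun v : EuclideanSpace ℝ ι => M i k * v k * (M j l * v l))
      (closedBall 0 ε) := fun k l =>
    (by fun_prop : Continuous fun v : EuclideanSpace ℝ ι => M i k * v k * (M j l * v l))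
      |>.continuousOn.integrableOn_compact (isCompact_closedBall _ _)
  have hmoment : ∀ k l, ∫ v in closedBall (0 : EuclideanSpace ℝ ι) ε, M i k * v k * (M j l * v l)
      = if k = l then M i k * M j k * (volume.real (closedBall (0 : EuclideanSpace ℝ ι) 1) *
        ε ^ (Fintype.card ι + 2) / (Fintype.card ι + 2)) else 0 := fun k l => by
    have hc : ∀ v : EuclideanSpace ℝ ι, M i k * v k * (M j l * v l) = M i k * M j l * (v k * v l) :=
      fun v => by ring
    simp_rw [hc, integral_const_mul]
    split_ifs with hkl
    · subst hkl; rw [← integral_closedBall_coord_sq hε k]; simp [sq]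
    · simp [integral_closedBall_coord_mul_coord_of_ne ε hkl]
  simp_rw [Finset.sum_mul_sum]
  rw [integral_finsetSum _ fun k _ => integrable_finsetSum _ fun l _ => hint k l]
  simp_rw [integral_finsetSum _ fun l _ => hint _ l, hmoment, Finset.sum_ite_eq,
    Finset.mem_univ, if_true, Matrix.mul_apply, Matrix.transpose_apply, Finset.sum_mul]

theorem Asymptotics.IsBigO.div_sub_div {α 𝕜 : Type*} [NormedField 𝕜] {l : Filter α}
    {f g k : α → 𝕜} {a b : 𝕜} (hb : b ≠ 0) (hk : Tendsto k l (𝓝 0))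
    (hf : (fun t => f t - a) =O[l] k) (hg : (fun t => g t - b) =O[l] k) :
    (fun t => f t / g t - a / b) =O[l] k := by
  have hgb : Tendsto g l (𝓝 b) := by
    simpa using (hg.trans_tendsto hk).add_const b
  have hinv : (fun t => (g t)⁻¹) =O[l] fun _ => (1 : 𝕜) := (hgb.inv₀ hb).isBigO_one 𝕜
  refine ((hf.sub (hg.const_mul_left (a / b))).mul hinv).congr' ?_ (by simp)
  filter_upwards [hgb.eventually_ne hb] with t ht
  field_simp
  ring

theorem isBigO_pow_div_pow {f : ℝ → ℝ} {m k : ℕ}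
    (hf : f =O[𝓝[>] 0] fun ε => ε ^ (m + k)) :
    (fun ε => f ε / ε ^ m) =O[𝓝[>] 0] fun ε => ε ^ k := by
  refine (hf.mul (isBigO_refl (fun ε : ℝ => (ε ^ m)⁻¹) _)).congr' (by simp [div_eq_mul_inv]) ?_
  filter_upwards [self_mem_nhdsWithin] with ε (hε : 0 < ε)
  field_simp
  ring

theorem isBigO_div_sq_mul_sub_div {N D : ℝ → ℝ} {a b : ℝ} (hb : b ≠ 0) (n : ℕ)
    (hN : (fun ε => N ε - a * ε ^ (n + 2)) =O[𝓝[>] 0] fun ε => ε ^ (n + 4))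
    (hD : (fun ε => D ε - b * ε ^ n) =O[𝓝[>] 0] fun ε => ε ^ (n + 2)) :
    (fun ε => N ε / (ε ^ 2 * D ε) - a / b) =O[𝓝[>] 0] fun ε => ε ^ 2 := by
  have hε : ∀ᶠ ε in 𝓝[>] (0 : ℝ), ε ≠ 0 := eventually_mem_nhdsWithin.mono fun ε h => h.ne'
  have hN' := isBigO_pow_div_pow (m := n + 2) (k := 2) (hN.congr_right fun ε => by ring_nf)
  have hD' := isBigO_pow_div_pow (m := n) (k := 2) hD
  have hk : Tendsto (fun ε : ℝ => ε ^ 2) (𝓝[>] 0) (𝓝 0) := by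
    simpa using ((continuous_pow 2).tendsto (0 : ℝ)).mono_left nhdsWithin_le_nhds
  refine (IsBigO.div_sub_div (f := fun ε => N ε / ε ^ (n + 2)) (g := fun ε => D ε / ε ^ n) (a := a)
    hb hk (hN'.congr' ?_ EventuallyEq.rfl) (hD'.congr' ?_ EventuallyEq.rfl)).congr' ?_
    EventuallyEq.rfl
  all_goals filter_upwards [hε] with ε hε
  · field_simp
  · field_simp
  · rw [div_div_div_eq, pow_add]
    field_simp

theorem isBigO_setIntegral_closedBall_covariance_sub {d : ℕ}
    {Φ : EuclideanSpace ℝ (Fin d) → EuclideanSpace ℝ (Fin d)} {P : EuclideanSpace ℝ (Fin d) → ℝ}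
    {x : EuclideanSpace ℝ (Fin d)} (hΦ : ContDiffAt ℝ 3 Φ x) (hP : ContDiffAt ℝ 2 P x)
    (i j : Fin d) :
    (fun ε => (∫ u in closedBall x ε, (Φ u - Φ x) i * (Φ u - Φ x) j * P u) -
      P x * (jacobianMatrix Φ x * (jacobianMatrix Φ x)ᵀ) i j *
        volume.real (closedBall (0 : EuclideanSpace ℝ (Fin d)) 1) / (d + 2) * ε ^ (d + 2))
      =O[𝓝[>] 0] fun ε => ε ^ (d + 4) := by
  have hcont : ∀ᶠ u in 𝓝 x, ContinuousAt Φ u ∧ ContinuousAt P u :=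
    ((hΦ.eventually (by simp)).and (hP.eventually (by simp))).mono fun u hu =>
      ⟨hu.1.continuousAt, hu.2.continuousAt⟩
  refine (isBigO_setIntegral_closedBall_sub volume (x := x)
    (Ψ := fun u => (Φ u - Φ x) i * (Φ u - Φ x) j * P u)
    (h := fun v => P x * (fderiv ℝ Φ x v i * fderiv ℝ Φ x v j))
    (hcont.mono fun u ⟨hΦu, hPu⟩ => by fun_prop) (by fun_prop) (fun v => by simp)
    ((hΦ.isBigO_even_part_covariance_integrand hP i j).congr_left
      fun v => by simp only [smul_eq_mul])).congr' ?_ (by simp [finrank_euclideanSpace])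
  filter_upwards [self_mem_nhdsWithin] with ε (hε : 0 < ε)
  simp only [fderiv_apply_eq_sum_jacobianMatrix]
  rw [integral_const_mul, integral_closedBall_sum_mul_sum _ i j hε.le, Fintype.card_fin]
  ring

theorem normalized_local_covariance_matrix_expansion_flat_general
    (d : ℕ) (Ω : Set (EuclideanSpace ℝ (Fin d))) (hΩ : IsOpen Ω)
    (x : EuclideanSpace ℝ (Fin d)) (hx : x ∈ Ω)
    (Φ : EuclideanSpace ℝ (Fin d) → EuclideanSpace ℝ (Fin d))
    (hΦ : ContDiffOn ℝ 3 Φ Ω)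
    (P : EuclideanSpace ℝ (Fin d) → ℝ) (hP : ContDiffOn ℝ 2 P Ω)
    (hPx : 0 < P x) :
    ∀ i j : Fin d,
      (fun ε : ℝ =>
          (∫ u in closedBall x ε, (Φ u - Φ x) i * (Φ u - Φ x) j * P u) /
              (ε ^ 2 * ∫ u in closedBall x ε, P u)
            - (1 / (d + 2)) * (jacobianMatrix Φ x * (jacobianMatrix Φ x)ᵀ) i j)
        =O[𝓝[>] (0 : ℝ)] fun ε => ε ^ 2 := by
  intro i j
  have hΦx : ContDiffAt ℝ 3 Φ x := hΦ.contDiffAt (hΩ.mem_nhds hx)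
  have hPx' : ContDiffAt ℝ 2 P x := hP.contDiffAt (hΩ.mem_nhds hx)
  have hω : 0 < volume.real (closedBall (0 : EuclideanSpace ℝ (Fin d)) 1) :=
    ENNReal.toReal_pos (measure_closedBall_pos volume 0 one_pos).ne' measure_closedBall_lt_top.ne
  have hD := hPx'.isBigO_setIntegral_closedBall_sub_mul_measure volume
  rw [finrank_euclideanSpace_fin] at hD
  refine (isBigO_div_sq_mul_sub_div (mul_pos hPx hω).ne' d
    (isBigO_setIntegral_closedBall_covariance_sub hΦx hPx' i j) hD).congr_left fun ε => ?_
  field_simp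

/-- As `ε → 0⁺`, the normalized local covariance matrix satisfies
`[∫_{B_ε(x)} (Φ(u) − Φ(x))(Φ(u) − Φ(x))ᵀ P(u) du] / (ε² ∫_{B_ε(x)} P(u) du)
  = (1/(d+2))·DΦ(x)·DΦ(x)ᵀ + O(ε²)` (entrywise). -/
theorem normalized_local_covariance_matrix_expansion_flat
    (d : ℕ) (hd : 1 ≤ d) (Ω : Set (EuclideanSpace ℝ (Fin d))) (hΩ : IsOpen Ω)
    (x : EuclideanSpace ℝ (Fin d)) (hx : x ∈ Ω)
    (Φ : EuclideanSpace ℝ (Fin d) → EuclideanSpace ℝ (Fin d))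
    (hΦ : ContDiffOn ℝ 3 Φ Ω)
    (P : EuclideanSpace ℝ (Fin d) → ℝ) (hP : ContDiffOn ℝ 2 P Ω)
    (hPx : 0 < P x) (hPnn : ∀ u ∈ Ω, 0 ≤ P u) :
    ∀ i j : Fin d,
      (fun ε : ℝ =>
          (∫ u in closedBall x ε, (Φ u - Φ x) i * (Φ u - Φ x) j * P u) /
              (ε ^ 2 * ∫ u in closedBall x ε, P u)
            - (1 / (d + 2)) * (jacobianMatrix Φ x * (jacobianMatrix Φ x)ᵀ) i j)
        =O[𝓝[>] (0 : ℝ)] fun ε => ε ^ 2 :=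
  normalized_local_covariance_matrix_expansion_flat_general d Ω hΩ x hx Φ hΦ P hP hPx
end
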